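/- arXiv:2302.08400 — 4 statements merged into one kernel-verified Lean document; each statement's English description precedes it below -/
import Mathlib

section
/- There are no rational numbers λ, ν and positive coprime integers a, b with a > 0, b > 0 and nonzero integer c such that (a²/3)x³ + (a(2b−a)/2)x² + (a²/6 − ab + b²)x = c³·(λx+ν)(λx+ν+1)(λx+ν+2) as polynomials in x. -/
set_option maxHeartbeats 1000000 in
/-- There are no rationals `λ, ν`, positive coprime integers `a, b` and nonzero
integer `c` with `S_{a,b}^2(x) = c³·R₃(λx+ν)` identically. -/
theorem no_S2_eq_R3 :
    ¬ ∃ (lam ν : ℚ) (a b : ℕ) (c : ℤ), 0 < a ∧ 0 < b ∧ Nat.Coprime a b ∧ c ≠ 0 ∧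
      ∀ x : ℚ,
        (a : ℚ) ^ 2 / 3 * x ^ 3 + (a : ℚ) * (2 * b - a) / 2 * x ^ 2 +
            ((a : ℚ) ^ 2 / 6 - a * b + b ^ 2) * x =
          (c : ℚ) ^ 3 * ((lam * x + ν) * (lam * x + ν + 1) * (lam * x + ν + 2)) := by
  rintro ⟨lam, ν, a, b, c, ha, hb, hcop, hc, h⟩
  have ha' : (a:ℚ) ≠ 0 := Nat.cast_ne_zero.mpr ha.ne'
  have hb' : (b:ℚ) ≠ 0 := Nat.cast_ne_zero.mpr hb.ne'
  have hc' : (c:ℚ) ≠ 0 := Int.cast_ne_zero.mpr hc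
  have hc3 : (c:ℚ)^3 ≠ 0 := pow_ne_zero _ hc'
  have h0 := h 0
  have h1 := h 1
  have hm1 := h (-1)
  have h2 := h 2
  have hA : (a:ℚ)^2/3 = (c:ℚ)^3 * lam^3 := by
    linear_combination (-1/2)*h1 + (-1/6)*hm1 + (1/6)*h2 + (1/2)*h0
  have hB : (a:ℚ)*(2*(b:ℚ)-a)/2 = (c:ℚ)^3 * (3*lam^2*ν + 3*lam^2) := by
    linear_combination (1/2)*h1 + (1/2)*hm1 - h0
  have hC : (a:ℚ)^2/6 - a*b + (b:ℚ)^2 = (c:ℚ)^3 * (3*lam*ν^2 + 6*lam*ν + 2*lam) := by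
    linear_combination h1 - (1/3)*hm1 - (1/6)*h2 - (1/2)*h0
  have hD : ν * (ν+1) * (ν+2) = 0 := by
    have hz : (c:ℚ)^3 * (ν * (ν+1) * (ν+2)) = 0 := by linear_combination -h0
    exact (mul_eq_zero.mp hz).resolve_left hc3
  -- helper: in the cases ν = 0 and ν = -2 we get a = b = 1
  have hab1 : (a:ℚ)*(2*(b:ℚ)-a)/2 * ((a:ℚ)*(2*(b:ℚ)-a)/2) =
      (9/2) * ((a:ℚ)^2/3) * ((a:ℚ)^2/6 - a*b + (b:ℚ)^2) → a = 1 ∧ b = 1 := by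
    intro key
    have hq : (a:ℚ)^2 * b * ((a:ℚ) - b) = 0 := by linear_combination 2*key
    have hab : (a:ℚ) = b := by
      rcases mul_eq_zero.mp hq with h' | h'
      · rcases mul_eq_zero.mp h' with h'' | h''
        · exact absurd h'' (pow_ne_zero _ ha')
        · exact absurd h'' hb'
      · linarith
    have habn : a = b := by exact_mod_cast hab
    have hb1 : b = 1 := by
      have := hcop
      rw [habn] at this
      simpa [Nat.Coprime, Nat.gcd_self] using this
    exact ⟨by omega, hb1⟩
  rcases mul_eq_zero.mp hD with hD' | hν2
  · rcases mul_eq_zero.mp hD' with hν0 | hν1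
    · -- ν = 0
      subst hν0
      have key : (a:ℚ)*(2*(b:ℚ)-a)/2 * ((a:ℚ)*(2*(b:ℚ)-a)/2) =
          (9/2) * ((a:ℚ)^2/3) * ((a:ℚ)^2/6 - a*b + (b:ℚ)^2) := by
        rw [hA, hB, hC]; ring
      obtain ⟨ha1, hb1⟩ := hab1 key
      subst ha1; subst hb1
      have e1 : (c:ℚ)^3 * lam^2 = 1/6 := by push_cast at hB ⊢; linarith [hB]
      have e2 : (c:ℚ)^3 * lam = 1/12 := by push_cast at hC ⊢; linarith [hC]
      have hlam : lam = 2 := by linear_combination 12*e1 - 12*lam*e2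
      rw [hlam] at e2
      have : (c:ℚ)^3 * 24 = 1 := by linarith
      have hz : (c^3 * 24 : ℤ) = 1 := by exact_mod_cast this
      have : (24:ℤ) ∣ 1 := ⟨c^3, by linarith⟩
      norm_num at this
    · -- ν = -1
      have hν : ν = -1 := by linarith
      subst hν
      have hB0 : (a:ℚ) * (2*(b:ℚ)-a) = 0 := by
        have : (c:ℚ)^3 * (3*lam^2*(-1) + 3*lam^2) = 0 := by ring
        rw [this] at hB; linarith
      have h2b : (2*(b:ℚ)) = a := by
        rcases mul_eq_zero.mp hB0 with h' | h'
        · exact absurd h' ha'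
        · linarith
      have h2bn : 2*b = a := by exact_mod_cast h2b
      have hbd : b ∣ a := ⟨2, by omega⟩
      have hb1 : b = 1 := Nat.eq_one_of_dvd_coprimes hcop hbd dvd_rfl
      have ha2 : a = 2 := by omega
      subst ha2; subst hb1
      push_cast at hA hC
      have e2 : (c:ℚ)^3 * lam = 1/3 := by linear_combination hC
      have hl2 : (lam - 2) * (lam + 2) = 0 := by
        linear_combination -3*lam^2*e2 - 3*hA
      rcases mul_eq_zero.mp hl2 with h' | h'
      · have hlam : lam = 2 := by linarith
        rw [hlam] at e2
        have : (c:ℚ)^3 * 6 = 1 := by linarith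
        have hz : (c^3 * 6 : ℤ) = 1 := by exact_mod_cast this
        have : (6:ℤ) ∣ 1 := ⟨c^3, by linarith⟩
        norm_num at this
      · have hlam : lam = -2 := by linarith
        rw [hlam] at e2
        have : (c:ℚ)^3 * 6 = -1 := by linarith
        have hz : (c^3 * 6 : ℤ) = -1 := by exact_mod_cast this
        have : (6:ℤ) ∣ 1 := ⟨-c^3, by linarith⟩
        norm_num at this
  · -- ν = -2
    have hν : ν = -2 := by linarith
    subst hν
    have key : (a:ℚ)*(2*(b:ℚ)-a)/2 * ((a:ℚ)*(2*(b:ℚ)-a)/2) =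
        (9/2) * ((a:ℚ)^2/3) * ((a:ℚ)^2/6 - a*b + (b:ℚ)^2) := by
      rw [hA, hB, hC]; ring
    obtain ⟨ha1, hb1⟩ := hab1 key
    subst ha1; subst hb1
    have e1 : (c:ℚ)^3 * lam^2 = -1/6 := by push_cast at hB ⊢; linarith [hB]
    have e2 : (c:ℚ)^3 * lam = 1/12 := by push_cast at hC ⊢; linarith [hC]
    have hlam : lam = -2 := by linear_combination 12*e1 - 12*lam*e2
    rw [hlam] at e2
    have : (c:ℚ)^3 * 24 = -1 := by linarith
    have hz : (c^3 * 24 : ℤ) = -1 := by exact_mod_cast this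
    have : (24:ℤ) ∣ 1 := ⟨-c^3, by linarith⟩
    norm_num at this
end

section
/- There is no integer m ≥ 2, nonzero integers a, c, and nonzero rationals a₁, b₁, α satisfying simultaneously α^m = b₁^{−2}/24, α³ = a₁^{−2}·(m²−1)/24, and c^m·a₁^m = a²·b₁³/3. (Consequence: from these one derives 1/(2⁹·3⁵) = (c^m/a²)²·((m²−1)/24)^m, forcing m odd and m²−1 to be a perfect square of a rational, a contradiction.) -/
private lemma aux_even_m_false (m F c a u v : ℕ) (hm : Even m) (hu : Odd u)
    (h : 2*m*c + m*F + u = 4*a + m*v) : False := by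
  obtain ⟨P, hP⟩ : Even (m*F) := (Nat.even_mul).mpr (Or.inl hm)
  obtain ⟨Q, hQ⟩ : Even (m*v) := (Nat.even_mul).mpr (Or.inl hm)
  have hR : ∃ R, 2*m*c = R + R := ⟨m*c, by ring⟩
  obtain ⟨R, hR⟩ := hR
  obtain ⟨s, hs⟩ := hu
  rw [hP, hQ, hR, hs] at h
  omega

private lemma aux_even_F (m F c a u v : ℕ) (hm : Odd m) (huv : Even (u+v))
    (h : 2*m*c + m*F + u = 4*a + m*v) : Even F := by
  by_contra hF
  rw [Nat.not_even_iff_odd] at hF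
  obtain ⟨P, hP⟩ : Odd (m*F) := hm.mul hF
  have hR : ∃ R, 2*m*c = R + R := ⟨m*c, by ring⟩
  obtain ⟨R, hR⟩ := hR
  rcases Nat.even_or_odd v with hv | hv
  · have hu : Even u := (Nat.even_add.mp huv).mpr hv
    obtain ⟨Q, hQ⟩ : Even (m*v) := (Nat.even_mul).mpr (Or.inr hv)
    obtain ⟨S, hS⟩ := hu
    rw [hP, hQ, hR, hS] at h
    omega
  · have hu : Odd u := by
      rcases Nat.even_or_odd u with h' | h'
      · exact absurd ((Nat.even_add.mp huv).mp h') (Nat.not_even_iff_odd.mpr hv)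
      · exact h'
    obtain ⟨Q, hQ⟩ : Odd (m*v) := hm.mul hv
    obtain ⟨S, hS⟩ := hu
    rw [hP, hQ, hR, hS] at h
    omega

private lemma isSquare_of_even_factorization {n : ℕ} (hn : n ≠ 0)
    (h : ∀ p, Even (n.factorization p)) : ∃ r, r * r = n := by
  refine ⟨n.factorization.prod fun p k => p ^ (k/2), ?_⟩
  conv_rhs => rw [← Nat.factorization_prod_pow_eq_self hn]
  rw [← Finsupp.prod_mul]
  apply Finsupp.prod_congr
  intro p hp
  obtain ⟨j, hj⟩ := h p
  rw [hj, ← pow_add]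
  congr 1
  omega

/-- There is no integer `m ≥ 2`, nonzero integers `a, c`, and nonzero rationals
`a₁, b₁, α` with `α^m = b₁⁻²/24`, `α³ = a₁⁻²(m²−1)/24`, `c^m a₁^m = a² b₁³/3`. -/
theorem no_third_kind_system :
    ¬ ∃ (m : ℕ) (a c : ℤ) (a₁ b₁ α : ℚ), 2 ≤ m ∧ a ≠ 0 ∧ c ≠ 0 ∧
      a₁ ≠ 0 ∧ b₁ ≠ 0 ∧ α ≠ 0 ∧
      α ^ m = b₁⁻¹ ^ 2 / 24 ∧
      α ^ 3 = a₁⁻¹ ^ 2 * ((m : ℚ) ^ 2 - 1) / 24 ∧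
      (c : ℚ) ^ m * a₁ ^ m = (a : ℚ) ^ 2 * b₁ ^ 3 / 3 := by
  rintro ⟨m, a, c, a₁, b₁, α, hm, ha, hc, ha₁, hb₁, hα, h1, h2, h3⟩
  set t : ℚ := (m:ℚ)^2 - 1 with ht
  -- auxiliary algebra over ℚ
  have e1 : (b₁⁻¹^2/24)^3 * (b₁^6*24^3) = 1 := by
    field_simp
  have e2 : (a₁⁻¹^2*t/24)^m * (a₁^(2*m) * (24:ℚ)^m) = t^m := by
    have h' : a₁^(2*m) * (24:ℚ)^m = (a₁^2*24)^m := by rw [mul_pow, pow_mul]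
    rw [h', ← mul_pow]
    congr 1
    field_simp
  have hA' : a₁^(2*m) * (24:ℚ)^m = t^m * (b₁^6 * 24^3) := by
    calc a₁^(2*m) * (24:ℚ)^m
        = ((b₁⁻¹^2/24)^3 * (b₁^6*24^3)) * (a₁^(2*m) * 24^m) := by rw [e1, one_mul]
      _ = ((α^m)^3 * (b₁^6*24^3)) * (a₁^(2*m) * 24^m) := by rw [h1]
      _ = ((α^3)^m * (a₁^(2*m) * 24^m)) * (b₁^6*24^3) := by
            rw [← pow_mul, ← pow_mul, mul_comm m 3]; ring
      _ = ((a₁⁻¹^2*t/24)^m * (a₁^(2*m) * 24^m)) * (b₁^6*24^3) := by rw [h2]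
      _ = t^m * (b₁^6*24^3) := by rw [e2]
  have hB : (c:ℚ)^(2*m) * a₁^(2*m) * 9 = (a:ℚ)^4 * b₁^6 := by
    linear_combination (9*(c:ℚ)^m*a₁^m + 3*(a:ℚ)^2*b₁^3) * h3
  have E : (c:ℚ)^(2*m) * t^m * (2^9*3^5) = (a:ℚ)^4 * (24:ℚ)^m := by
    apply mul_right_cancel₀ (pow_ne_zero 6 hb₁)
    linear_combination (24:ℚ)^m * hB - 9*(c:ℚ)^(2*m) * hA'
  rw [ht] at E
  have EI : (c:ℤ)^(2*m) * ((m:ℤ)^2-1)^m * (2^9*3^5) = (a:ℤ)^4 * 24^m := by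
    exact_mod_cast E
  have hm2 : 1 ≤ m^2 := le_trans (by norm_num) (Nat.pow_le_pow_left hm 2)
  have hm2' : 2^2 ≤ m^2 := Nat.pow_le_pow_left hm 2
  have hcast : ((m^2 - 1 : ℕ) : ℤ) = (m:ℤ)^2 - 1 := by
    rw [Nat.cast_sub hm2]; push_cast; ring
  rw [← hcast] at EI
  have hcn : c.natAbs ≠ 0 := Int.natAbs_ne_zero.mpr hc
  have han : a.natAbs ≠ 0 := Int.natAbs_ne_zero.mpr ha
  have htn : m^2 - 1 ≠ 0 := Nat.sub_ne_zero_of_lt (lt_of_lt_of_le (by norm_num) hm2')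
  have EN : c.natAbs^(2*m) * (m^2-1)^m * (2^9*3^5) = a.natAbs^4 * 24^m := by
    have h0 := congrArg Int.natAbs EI
    simpa [Int.natAbs_mul, Int.natAbs_pow] using h0
  -- factorization equation
  have fe : ∀ p : ℕ, 2*m * (c.natAbs.factorization p) + m * ((m^2-1).factorization p)
      + ((2^9*3^5 : ℕ)).factorization p
      = 4 * (a.natAbs.factorization p) + m * ((24:ℕ)).factorization p := by
    intro p
    have h0 := congrArg (fun n : ℕ => n.factorization p) EN
    simp only [Nat.factorization_mul (mul_ne_zero (pow_ne_zero _ hcn) (pow_ne_zero _ htn))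
        (show (2^9*3^5 : ℕ) ≠ 0 by norm_num),
      Nat.factorization_mul (pow_ne_zero _ hcn) (pow_ne_zero _ htn),
      Nat.factorization_mul (pow_ne_zero 4 han) (pow_ne_zero m (show (24:ℕ) ≠ 0 by norm_num)),
      Nat.factorization_pow, Finsupp.add_apply, Finsupp.smul_apply, smul_eq_mul] at h0
    linarith [h0]
  -- constant factorization values
  have hf2 : ∀ p : ℕ, ((2^9*3^5 : ℕ)).factorization p
      = 9 * (Finsupp.single 2 1 : ℕ →₀ ℕ) p + 5 * (Finsupp.single 3 1 : ℕ →₀ ℕ) p := by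
    intro p
    rw [Nat.factorization_mul (by norm_num) (by norm_num), Nat.factorization_pow,
      Nat.factorization_pow, Nat.prime_two.factorization, Nat.prime_three.factorization]
    simp [Finsupp.single_apply]
  have hf24 : ∀ p : ℕ, ((24:ℕ)).factorization p
      = 3 * (Finsupp.single 2 1 : ℕ →₀ ℕ) p + (Finsupp.single 3 1 : ℕ →₀ ℕ) p := by
    intro p
    have h24 : (24:ℕ) = 2^3 * 3 := by norm_num
    rw [h24, Nat.factorization_mul (by norm_num) (by norm_num), Nat.factorization_pow,
      Nat.prime_two.factorization, Nat.prime_three.factorization]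
    simp [Finsupp.single_apply]
  have key3 := fe 3
  rw [hf2 3, hf24 3] at key3
  simp [Finsupp.single_apply] at key3
  have key3' : 2 * m * c.natAbs.factorization 3 + m * ((m^2-1).factorization 3) + 5
      = 4 * a.natAbs.factorization 3 + m * 1 := by rw [mul_one]; exact key3
  have hmodd : Odd m := by
    by_contra h'
    exact aux_even_m_false _ _ _ _ _ _ (Nat.not_odd_iff_even.mp h') (by decide) key3'
  have hev3 : Even ((m^2-1).factorization 3) :=
    aux_even_F _ _ _ _ _ _ hmodd (by decide) key3'
  have key2 := fe 2
  rw [hf2 2, hf24 2] at key2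
  simp [Finsupp.single_apply] at key2
  have hev2 : Even ((m^2-1).factorization 2) :=
    aux_even_F _ _ _ _ _ _ hmodd (by decide) key2
  have hall : ∀ p, Even ((m^2-1).factorization p) := by
    intro p
    by_cases pp : p.Prime
    · by_cases p2 : p = 2
      · subst p2; exact hev2
      by_cases p3 : p = 3
      · subst p3; exact hev3
      have hpd : ∀ k : ℕ, ¬ p ∣ 2^9*3^5*24^k := by
        intro k hd
        rcases (Nat.Prime.dvd_mul pp).mp hd with hd' | hd'
        · rcases (Nat.Prime.dvd_mul pp).mp hd' with hd'' | hd''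
          · exact p2 ((Nat.prime_dvd_prime_iff_eq pp Nat.prime_two).mp
              (pp.dvd_of_dvd_pow hd''))
          · exact p3 ((Nat.prime_dvd_prime_iff_eq pp Nat.prime_three).mp
              (pp.dvd_of_dvd_pow hd''))
        · have h24 : (24:ℕ) = 2^3*3 := by norm_num
          rw [h24] at hd'
          have := pp.dvd_of_dvd_pow hd'
          rcases (Nat.Prime.dvd_mul pp).mp this with hd'' | hd''
          · exact p2 ((Nat.prime_dvd_prime_iff_eq pp Nat.prime_two).mp
              (pp.dvd_of_dvd_pow hd''))
          · exact p3 ((Nat.prime_dvd_prime_iff_eq pp Nat.prime_three).mp hd'')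
      have hu : ((2^9*3^5 : ℕ)).factorization p = 0 := by
        apply Nat.factorization_eq_zero_of_not_dvd
        intro hd
        exact hpd 0 (by simpa using Dvd.dvd.mul_right hd 1)
      have hv : ((24:ℕ)).factorization p = 0 := by
        apply Nat.factorization_eq_zero_of_not_dvd
        intro hd
        exact hpd 1 (by exact Dvd.dvd.mul_left (by simpa using hd) _)
      have keyp := fe p
      rw [hu, hv] at keyp
      exact aux_even_F _ _ _ _ _ _ hmodd (by decide) keyp
    · exact (Nat.factorization_eq_zero_of_not_prime _ pp) ▸ Even.zero
  obtain ⟨r, hr⟩ := isSquare_of_even_factorization htn hall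
  have hr' : m^2 = r*r + 1 := by
    have := (Nat.sub_eq_iff_eq_add hm2).mp hr.symm
    omega
  have hrr : m*m = r*r+1 := by rw [← pow_two]; exact hr'
  have hrm : r + 1 ≤ m := by nlinarith
  have h2 : (r+1)*(r+1) ≤ m*m := Nat.mul_le_mul hrm hrm
  nlinarith
end

section
/- For positive coprime integers a, b and positive integer c, if (2b − a)² = 8ac⁴ then a = 2 and (b−1)² = 4c⁴. -/
/-- For coprime positive integers `a, b` and positive `c`, if `(2b−a)² = 8ac⁴`
then `a = 2` and `(b−1)² = 4c⁴`. -/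
theorem a_eq_two_of_sq_eq (a b c : ℕ) (ha : 0 < a) (hb : 0 < b) (hc : 0 < c)
    (hcop : Nat.Coprime a b)
    (h : (2 * (b : ℤ) - a) ^ 2 = 8 * a * c ^ 4) :
    a = 2 ∧ ((b : ℤ) - 1) ^ 2 = 4 * (c : ℤ) ^ 4 := by
  -- a is even
  have h2a : (2 : ℤ) ∣ (a : ℤ) := by
    have hd : (2 : ℤ) ∣ (2 * (b : ℤ) - a) := by
      have : (2 : ℤ) ∣ (2 * (b : ℤ) - a) ^ 2 := ⟨4 * a * c ^ 4, by linarith⟩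
      exact Int.Prime.dvd_pow' Nat.prime_two this
    omega
  have h2a' : 2 ∣ a := by exact_mod_cast h2a
  obtain ⟨a₁, rfl⟩ := h2a'
  -- reduce the equation
  have h1 : ((b : ℤ) - a₁) ^ 2 = 4 * a₁ * c ^ 4 := by
    have : (2 * ((b : ℤ) - a₁)) ^ 2 = 4 * (4 * a₁ * c ^ 4) := by push_cast at h ⊢; linarith
    nlinarith [this]
  -- a₁ = 1
  have ha1 : a₁ = 1 := by
    by_contra hne
    have ha₁pos : 0 < a₁ := by omega
    obtain ⟨p, hp, hpdvd⟩ := Nat.exists_prime_and_dvd hne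
    have hpz : (p : ℤ) ∣ ((b : ℤ) - a₁) ^ 2 := by
      rw [h1]; exact Dvd.dvd.mul_right (Dvd.dvd.mul_left (by exact_mod_cast hpdvd) 4) _
    have hpd : (p : ℤ) ∣ ((b : ℤ) - a₁) :=
      Int.Prime.dvd_pow' hp hpz
    have hpb : (p : ℤ) ∣ (b : ℤ) := by
      have ha : (p : ℤ) ∣ (a₁ : ℤ) := by exact_mod_cast hpdvd
      have := dvd_add hpd ha
      simpa using this
    have hpb' : p ∣ b := by exact_mod_cast hpb
    have hpa : p ∣ 2 * a₁ := Dvd.dvd.mul_left hpdvd 2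
    have := Nat.Coprime.eq_one_of_dvd (Nat.Coprime.coprime_dvd_left hpa hcop) hpb'
    exact hp.one_lt.ne' this
  subst ha1
  refine ⟨rfl, ?_⟩
  push_cast at h
  nlinarith [h]
end

section
/- For a polynomial identity B_{2ℓ}(x) = (x² − x₀)^ℓ + C with ℓ ≥ 2, rational x₀ > 0 or x₀ arbitrary rational, and constant C: taking derivatives gives 2ℓ·B_{2ℓ−1}(x) = 2ℓ·x·(x² − x₀)^{ℓ−1}, so ±√x₀ would be roots of B_{2ℓ−1} of multiplicity ℓ−1 ≥ 1; if ℓ ≥ 3 these are multiple roots of B_{2ℓ−1}, contradicting the simplicity of the zeros of Bernoulli polynomials. Hence no identity B_{2ℓ}(x) = (x² − x₀)^ℓ + C holds for ℓ ≥ 3. -/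
/-!
The right-hand side is a polynomial in `X²`, so its coefficient of `X^(2ℓ-1)` vanishes, whereas
the coefficient of `X^(n-1)` in `B_n` is `n · B₁ = -n/2`, which is nonzero for `n = 2ℓ > 0`.
-/

open Polynomial

theorem Polynomial.coeff_bernoulli_sub_one {n : ℕ} (hn : 1 ≤ n) :
    (Polynomial.bernoulli n).coeff (n - 1) = -n / 2 := by
  rw [coeff_bernoulli, if_pos (Nat.sub_le n 1), Nat.sub_sub_self hn, _root_.bernoulli_one,
    Nat.choose_symm hn, Nat.choose_one_right]
  ring

theorem no_bernoulli_power_identity_general (ℓ : ℕ) (hℓ : 3 ≤ ℓ) (x₀ c₀ : ℚ) :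
    Polynomial.bernoulli (2 * ℓ) ≠ (X ^ 2 - Polynomial.C x₀) ^ ℓ + Polynomial.C c₀ := by
  intro h
  have h_expand : (X ^ 2 - C x₀) ^ ℓ + C c₀ = expand ℚ 2 ((X - C x₀) ^ ℓ + C c₀) := by
    simp only [map_add, map_pow, map_sub, expand_X, expand_C]
  have h_coeff := congrArg (coeff · (2 * ℓ - 1)) h
  rw [coeff_bernoulli_sub_one (by omega), h_expand, coeff_expand two_pos,
    if_neg (by omega)] at h_coeff
  have : (ℓ : ℚ) = 0 := by push_cast at h_coeff; linarith
  exact absurd (Nat.cast_eq_zero.mp this) (by omega)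

/-- For `ℓ ≥ 3`, no identity `B_{2ℓ}(x) = (x² − x₀)^ℓ + C` with `x₀ ∈ ℚ`, `x₀ ≠ 0`,
can hold. -/
theorem no_bernoulli_power_identity (ℓ : ℕ) (hℓ : 3 ≤ ℓ) (x₀ c₀ : ℚ) (hx₀ : x₀ ≠ 0) :
    Polynomial.bernoulli (2 * ℓ) ≠ (X ^ 2 - Polynomial.C x₀) ^ ℓ + Polynomial.C c₀ :=
  no_bernoulli_power_identity_general ℓ hℓ x₀ c₀
end
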